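/- arXiv:2002.08691 — 6 statements merged into one kernel-verified Lean document; each statement's English description precedes it below -/
import Mathlib

section
/- Assume the Setup. Let L ∈ A satisfy condition (2) and let U ⊆ M be a k-subspace satisfying condition (1) for L with witness s ∈ S. Set Q := {q ∈ R : q·U ⊆ U}. Then: (i) there is a smallest N ≥ 0 with ad_{L,L₀}^{N+1}(s) = 0, and S̄ := ad_{L,L₀}^{N}(s) is nonzero and satisfies L·S̄ = S̄·L₀; (ii) for every nonzero q ∈ Q there exist a smallest N_q ≥ 0 with ad_{L}^{N_q+1}(q) = 0 and a smallest N_{q,0} ≥ 0 with ad_{L₀}^{N_{q,0}+1}(q) = 0, and N_q = N_{q,0}; (iii) for every nonzero q ∈ Q, ad_{L}^{N_q}(q)·S̄ = S̄·ad_{L₀}^{N_q}(q); (iv) for all nonzero q, q′ ∈ Q, the elements ad_{L}^{N_q}(q) and ad_{L}^{N_{q′}}(q′) commute, and the elements ad_{L₀}^{N_{q,0}}(q) and ad_{L₀}^{N_{q′,0}}(q′) commute. -/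
/-!
The `ad_{L₀}`-nilpotency degree on `B` extends to a degree `deg` on the localization `A`
(`deg (u⁻¹ b) = deg b - deg u`); it is additive on products, does not increase under sums, and
`ad_{L₀}` lowers it. Condition (2) says `deg (L - L₀) < 0`, so `ad_{L,L₀}`, `ad_{L₀,L}` and `ad_L`
lower it too. The module conditions put `s ad_{L,L₀}ⁿ(s)`, `ad_{L₀,L}ⁿ(s) s` and `s ad_Lⁿ(q) s` in
`B`, which bounds `deg` from below along these orbits and forces nilpotency. In a domain of
characteristic zero the Leibniz rule makes nilpotency degrees additive,
`N_{ad_{a,c}}(x y) = N_{ad_{a,b}}(x) + N_{ad_{b,c}}(y)`, and comparing top Leibniz coefficients of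
`ad^{m+n}(x y)` and `ad^{m+n}(y x)` for commuting `x, y` gives the intertwining and commutation
relations.
-/

/-- `adOp a b x = a*x - x*b`, the operator `ad_{a,b}`. -/
def adOp {A : Type*} [Ring A] (a b : A) : A → A := fun x => a * x - x * b

/-- The ad-nilpotency degree of `b` with respect to `L₀`:
the smallest `n` with `ad_{L₀}^[n+1] b = 0`. -/
noncomputable def degAd {A : Type*} [Ring A] (L₀ b : A) : ℕ :=
  sInf {n : ℕ | (adOp L₀ L₀)^[n + 1] b = 0}

/-- Condition (2) of Theorem 4.4: `L = L₀` or `deg(L - L₀) < 0`, expressed via some `s' ∈ S`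
with `s'(L - L₀)` a nonzero element of `B` of `ad_{L₀}`-degree smaller than that of `s'`. -/
def cond2 {k A : Type*} [CommSemiring k] [Ring A] [Algebra k A]
    (B : Subalgebra k A) (S : Set A) (L₀ L : A) : Prop :=
  L = L₀ ∨ ∃ s' ∈ S, s' * (L - L₀) ∈ B ∧ s' * (L - L₀) ≠ 0 ∧
    degAd L₀ (s' * (L - L₀)) < degAd L₀ s'

/-- A `k`-subspace of the `A`-module `M` (with `k` acting through `algebraMap k A`). -/
def isSubspace (k A : Type*) {M : Type*} [CommSemiring k] [Ring A] [Algebra k A]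
    [AddCommGroup M] [Module A M] (U : Set M) : Prop :=
  (0 : M) ∈ U ∧ (∀ u ∈ U, ∀ v ∈ U, u + v ∈ U) ∧
    (∀ c : k, ∀ u ∈ U, (algebraMap k A c) • u ∈ U)

open Finset

section NilDeg

variable {α : Type*} [Zero α] {f : α → α} {x : α} {d m n : ℕ}

noncomputable def nilDeg (f : α → α) (x : α) : ℕ :=
  sInf {n | f^[n + 1] x = 0}

def HasNilDeg (f : α → α) (x : α) (d : ℕ) : Prop :=
  f^[d] x ≠ 0 ∧ f^[d + 1] x = 0

theorem nilDeg_def (f : α → α) (x : α) : nilDeg f x = sInf {n | f^[n + 1] x = 0} := rfl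

theorem iterate_eq_zero_of_le (hf : f 0 = 0) (hm : f^[m] x = 0) (hmn : m ≤ n) :
    f^[n] x = 0 := by
  obtain ⟨k, rfl⟩ := Nat.exists_eq_add_of_le hmn
  rw [add_comm, Function.iterate_add_apply, hm, Function.iterate_fixed hf]

theorem HasNilDeg.nilDeg_eq (hf : f 0 = 0) (h : HasNilDeg f x d) : nilDeg f x = d := by
  refine le_antisymm (Nat.sInf_le h.2) (not_lt.mp fun hlt => h.1 ?_)
  exact iterate_eq_zero_of_le hf (Nat.sInf_mem (s := {n | f^[n + 1] x = 0}) ⟨d, h.2⟩) hlt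

theorem HasNilDeg.unique (hf : f 0 = 0) (h : HasNilDeg f x m) (h' : HasNilDeg f x n) :
    m = n :=
  (h.nilDeg_eq hf).symm.trans (h'.nilDeg_eq hf)

theorem iterate_nilDeg_succ (hf : f 0 = 0) (hnil : ∃ n, f^[n] x = 0) :
    f^[nilDeg f x + 1] x = 0 := by
  obtain ⟨n, hn⟩ := hnil
  exact Nat.sInf_mem (s := {n | f^[n + 1] x = 0}) ⟨n, iterate_eq_zero_of_le hf hn n.le_succ⟩

theorem hasNilDeg_nilDeg (hf : f 0 = 0) (hx : x ≠ 0) (hnil : ∃ n, f^[n] x = 0) :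
    HasNilDeg f x (nilDeg f x) := by
  refine ⟨fun h0 => ?_, iterate_nilDeg_succ hf hnil⟩
  cases hd : nilDeg f x with
  | zero => exact hx (by simpa [hd] using h0)
  | succ k =>
    have : nilDeg f x ≤ k := Nat.sInf_le (show f^[k + 1] x = 0 by rwa [← hd])
    omega

theorem hasNilDeg_succ_iff : HasNilDeg f x (d + 1) ↔ HasNilDeg f (f x) d := by
  simp only [HasNilDeg, Function.iterate_succ_apply]

theorem HasNilDeg.iterate (h : HasNilDeg f x d) : HasNilDeg f (f^[d] x) 0 :=
  ⟨h.1, by rw [zero_add, Function.iterate_one, ← Function.iterate_succ_apply' f]; exact h.2⟩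

theorem HasNilDeg.nilDeg_apply_lt (hf : f 0 = 0) (h : HasNilDeg f x d) (hfx : f x ≠ 0) :
    nilDeg f (f x) < d := by
  cases d with
  | zero => exact absurd h.2 hfx
  | succ d => exact ((hasNilDeg_succ_iff.mp h).nilDeg_eq hf).trans_lt d.lt_succ_self

theorem exists_iterate_eq_zero_of_lt {ν : α → ℤ} (hν : ∀ y, f y ≠ 0 → ν (f y) < ν y)
    (C : ℤ) (hC : ∀ n, f^[n] x ≠ 0 → C ≤ ν (f^[n] x)) : ∃ n, f^[n] x = 0 := by
  by_contra! hne
  have hdrop : ∀ n, ν (f^[n] x) + n ≤ ν x := by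
    intro n
    induction n with
    | zero => simp
    | succ n ih =>
      have := hν _ (by rw [← Function.iterate_succ_apply' f n x]; exact hne (n + 1))
      rw [Function.iterate_succ_apply']
      push_cast
      omega
  obtain ⟨n, hn⟩ := exists_nat_gt (ν x - C)
  have := hdrop n
  have := hC n (hne n)
  omega

end NilDeg

section AdOp

variable {A : Type*} [Ring A]

def adAddHom (a b : A) : A →+ A := AddMonoidHom.mulLeft a - AddMonoidHom.mulRight b

@[simp] theorem coe_adAddHom (a b : A) : ⇑(adAddHom a b) = adOp a b := rfl

theorem adOp_zero (a b : A) : adOp a b 0 = 0 := map_zero (adAddHom a b)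

theorem adOp_iterate_add (a b x y : A) (n : ℕ) :
    (adOp a b)^[n] (x + y) = (adOp a b)^[n] x + (adOp a b)^[n] y :=
  iterate_map_add (adAddHom a b) n x y

theorem nilDeg_adOp_neg (a b x : A) : nilDeg (adOp a b) (-x) = nilDeg (adOp a b) x := by
  simp only [nilDeg, ← coe_adAddHom, iterate_map_neg, neg_eq_zero]

theorem hasNilDeg_one (a : A) [Nontrivial A] : HasNilDeg (adOp a a) 1 0 :=
  ⟨one_ne_zero, by simp [adOp]⟩

theorem nilDeg_adOp_one (a : A) [Nontrivial A] : nilDeg (adOp a a) 1 = 0 :=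
  (hasNilDeg_one a).nilDeg_eq (adOp_zero a a)

theorem adOp_eq_zero_iff {a b x : A} : adOp a b x = 0 ↔ a * x = x * b := sub_eq_zero

theorem adOp_mul (a b c x y : A) : adOp a c (x * y) = adOp a b x * y + x * adOp b c y := by
  simp only [adOp]; noncomm_ring

theorem adOp_iterate_mul (a b c x y : A) (n : ℕ) :
    (adOp a c)^[n] (x * y) =
      ∑ ij ∈ antidiagonal n, n.choose ij.1 • ((adOp a b)^[ij.1] x * (adOp b c)^[ij.2] y) := by
  induction n with
  | zero => simp
  | succ n ih =>
    rw [sum_antidiagonal_choose_succ_nsmul (fun i j => (adOp a b)^[i] x * (adOp b c)^[j] y),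
      Function.iterate_succ_apply', ih, ← coe_adAddHom, map_sum]
    simp only [map_nsmul, coe_adAddHom, adOp_mul a b c, nsmul_add, sum_add_distrib,
      ← Function.iterate_succ_apply' (adOp a b), ← Function.iterate_succ_apply' (adOp b c)]
    rw [add_comm]
    congr 1
    refine sum_congr rfl fun ij hij => ?_
    rw [Nat.choose_symm_of_eq_add (HasAntidiagonal.mem_antidiagonal.mp hij).symm]

section Leibniz

variable {a b c x y : A} {m n : ℕ}

theorem adOp_iterate_mul_eq_zero (hx : (adOp a b)^[m + 1] x = 0)
    (hy : (adOp b c)^[n + 1] y = 0) : (adOp a c)^[m + n + 1] (x * y) = 0 := by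
  rw [adOp_iterate_mul a b c]
  refine sum_eq_zero fun ij hij => ?_
  rw [HasAntidiagonal.mem_antidiagonal] at hij
  rcases le_or_gt ij.1 m with h | h
  · rw [iterate_eq_zero_of_le (adOp_zero b c) hy (by omega), mul_zero, smul_zero]
  · rw [iterate_eq_zero_of_le (adOp_zero a b) hx (by omega), zero_mul, smul_zero]

theorem adOp_iterate_mul_top (hx : (adOp a b)^[m + 1] x = 0)
    (hy : (adOp b c)^[n + 1] y = 0) :
    (adOp a c)^[m + n] (x * y) = (m + n).choose m • ((adOp a b)^[m] x * (adOp b c)^[n] y) := by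
  rw [adOp_iterate_mul a b c,
    sum_eq_single_of_mem (m, n) (HasAntidiagonal.mem_antidiagonal.mpr rfl)]
  rintro ⟨i, j⟩ hij hne
  rw [HasAntidiagonal.mem_antidiagonal] at hij
  rcases lt_or_gt_of_ne (show i ≠ m by rintro rfl; exact hne (by simp; omega)) with h | h
  · rw [iterate_eq_zero_of_le (adOp_zero b c) hy (by omega), mul_zero, smul_zero]
  · rw [iterate_eq_zero_of_le (adOp_zero a b) hx (by omega), zero_mul, smul_zero]

variable [IsDomain A] [CharZero A]

theorem HasNilDeg.adOp_mul (hx : HasNilDeg (adOp a b) x m) (hy : HasNilDeg (adOp b c) y n) :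
    HasNilDeg (adOp a c) (x * y) (m + n) := by
  refine ⟨?_, adOp_iterate_mul_eq_zero hx.2 hy.2⟩
  rw [adOp_iterate_mul_top hx.2 hy.2, nsmul_eq_mul]
  exact mul_ne_zero (Nat.cast_ne_zero.mpr (Nat.choose_pos (by omega)).ne') (mul_ne_zero hx.1 hy.1)

theorem adOp_iterate_mul_comm_of_commute (hxy : x * y = y * x)
    (hx : (adOp a a)^[m + 1] x = 0) (hy : (adOp a b)^[n + 1] y = 0)
    (hx' : (adOp b b)^[m + 1] x = 0) :
    (adOp a a)^[m] x * (adOp a b)^[n] y = (adOp a b)^[n] y * (adOp b b)^[m] x := by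
  have h := (adOp_iterate_mul_top hx hy).symm.trans
    (hxy ▸ add_comm n m ▸ adOp_iterate_mul_top hy hx')
  rw [Nat.choose_symm_add] at h
  exact nsmul_right_injective (Nat.choose_pos (by omega)).ne' h

/-- `T = ad_{a,b}^N s` and `T' = ad_{b,a}^{N'} s` are killed by `ad_{a,b}`, resp. `ad_{b,a}`, so
the `ad_a`-degree of `(T s) r (s T') = T (s r s) T'` is both `N' + e + N` and `d + e' + d`;
the case `r = 1` gives `N' + N = 2 d`. -/
theorem HasNilDeg.eq_of_adOp {s r : A} {N N' d e e' : ℕ} (hs : HasNilDeg (adOp a b) s N)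
    (hs' : HasNilDeg (adOp b a) s N') (hsb : HasNilDeg (adOp b b) s d)
    (hra : HasNilDeg (adOp a a) r e) (hrb : HasNilDeg (adOp b b) r e') : e = e' := by
  have hT := hs.iterate
  have hT' := hs'.iterate
  have key : ∀ {r : A} {e e' : ℕ}, HasNilDeg (adOp a a) r e → HasNilDeg (adOp b b) r e' →
      N' + e + N = d + e' + d := by
    intro r e e' hra hrb
    have h₁ := ((hT.adOp_mul hs').adOp_mul hra).adOp_mul (hs.adOp_mul hT')
    have h₂ := hT.adOp_mul (((hsb.adOp_mul hrb).adOp_mul hsb).adOp_mul hT')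
    simp only [← mul_assoc] at h₁ h₂
    have := h₁.unique (adOp_zero a a) h₂
    omega
  have := key hra hrb
  have := key (hasNilDeg_one a) (hasNilDeg_one b)
  omega

end Leibniz

end AdOp

structure AdNilpotentLocalization {A : Type*} [Ring A] (B : Subring A) (S : Set A) (L₀ : A) :
    Prop where
  subset : S ⊆ B
  comm : ∀ u ∈ S, ∀ v ∈ S, u * v = v * u
  zero_notMem : (0 : A) ∉ S
  one_mem : (1 : A) ∈ S
  mul_mem : ∀ u ∈ S, ∀ v ∈ S, u * v ∈ S
  exists_left_mul_mem : ∀ a, ∃ u ∈ S, u * a ∈ B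
  exists_right_mul_mem : ∀ a, ∃ v ∈ S, a * v ∈ B
  mem : L₀ ∈ B
  nilpotent : ∀ b ∈ B, ∃ n, (adOp L₀ L₀)^[n] b = 0

namespace AdNilpotentLocalization

variable {A : Type*} [Ring A] {B : Subring A} {S : Set A} {L₀ : A}

/-- The `ad_{L₀}`-degree of `B`, extended to fractions: `deg (u⁻¹ b) = deg b - deg u`. -/
noncomputable def deg (h : AdNilpotentLocalization B S L₀) (x : A) : ℤ :=
  nilDeg (adOp L₀ L₀) ((h.exists_left_mul_mem x).choose * x) -
    nilDeg (adOp L₀ L₀) (h.exists_left_mul_mem x).choose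

theorem ne_zero (h : AdNilpotentLocalization B S L₀) {u : A} (hu : u ∈ S) : u ≠ 0 :=
  fun hu0 => h.zero_notMem (hu0 ▸ hu)

theorem hasNilDeg (h : AdNilpotentLocalization B S L₀) {b : A} (hb : b ∈ B) (hb0 : b ≠ 0) :
    HasNilDeg (adOp L₀ L₀) b (nilDeg (adOp L₀ L₀) b) :=
  hasNilDeg_nilDeg (adOp_zero _ _) hb0 (h.nilpotent b hb)

theorem nilDeg_add_le (h : AdNilpotentLocalization B S L₀) {b c : A} (hb : b ∈ B)
    (hc : c ∈ B) :
    nilDeg (adOp L₀ L₀) (b + c) ≤ max (nilDeg (adOp L₀ L₀) b) (nilDeg (adOp L₀ L₀) c) := by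
  refine Nat.sInf_le (show _ = 0 from ?_)
  rw [adOp_iterate_add, iterate_eq_zero_of_le (adOp_zero _ _) (iterate_nilDeg_succ (adOp_zero _ _)
      (h.nilpotent b hb)) (by omega),
    iterate_eq_zero_of_le (adOp_zero _ _) (iterate_nilDeg_succ (adOp_zero _ _)
      (h.nilpotent c hc)) (by omega), add_zero]

variable [IsDomain A] [CharZero A]

theorem nilDeg_mul (h : AdNilpotentLocalization B S L₀) {b c : A} (hb : b ∈ B) (hc : c ∈ B)
    (hb0 : b ≠ 0) (hc0 : c ≠ 0) :
    nilDeg (adOp L₀ L₀) (b * c) = nilDeg (adOp L₀ L₀) b + nilDeg (adOp L₀ L₀) c :=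
  ((h.hasNilDeg hb hb0).adOp_mul (h.hasNilDeg hc hc0)).nilDeg_eq (adOp_zero _ _)

theorem deg_eq (h : AdNilpotentLocalization B S L₀) {x u v : A} (hx : x ≠ 0) (hu : u ∈ S)
    (hv : v ∈ S) (huxv : u * x * v ∈ B) :
    h.deg x = nilDeg (adOp L₀ L₀) (u * x * v) - nilDeg (adOp L₀ L₀) u -
      nilDeg (adOp L₀ L₀) v := by
  obtain ⟨hw, hwx⟩ := (h.exists_left_mul_mem x).choose_spec
  rw [deg]
  set w := (h.exists_left_mul_mem x).choose
  have hwuxv : w * (u * x * v) = u * (w * x) * v := by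
    rw [← mul_assoc, ← mul_assoc, ← mul_assoc, h.comm w hw u hu, mul_assoc u w]
  have e := congrArg (nilDeg (adOp L₀ L₀)) hwuxv
  rw [h.nilDeg_mul (h.subset hw) huxv (h.ne_zero hw) (mul_ne_zero (mul_ne_zero (h.ne_zero hu) hx)
      (h.ne_zero hv)),
    h.nilDeg_mul (B.mul_mem (h.subset hu) hwx) (h.subset hv)
      (mul_ne_zero (h.ne_zero hu) (mul_ne_zero (h.ne_zero hw) hx)) (h.ne_zero hv),
    h.nilDeg_mul (h.subset hu) hwx (h.ne_zero hu) (mul_ne_zero (h.ne_zero hw) hx)] at e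
  omega

theorem deg_of_mem (h : AdNilpotentLocalization B S L₀) {b : A} (hb : b ∈ B) (hb0 : b ≠ 0) :
    h.deg b = nilDeg (adOp L₀ L₀) b := by
  rw [h.deg_eq hb0 h.one_mem h.one_mem (by rwa [one_mul, mul_one]), one_mul, mul_one,
    nilDeg_adOp_one L₀]
  simp

theorem deg_mul (h : AdNilpotentLocalization B S L₀) {x y : A} (hx : x ≠ 0) (hy : y ≠ 0) :
    h.deg (x * y) = h.deg x + h.deg y := by
  obtain ⟨u, hu, hux⟩ := h.exists_left_mul_mem x
  obtain ⟨v, hv, hyv⟩ := h.exists_right_mul_mem y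
  have hassoc : u * (x * y) * v = u * x * (y * v) := by simp only [mul_assoc]
  rw [h.deg_eq (mul_ne_zero hx hy) hu hv (hassoc ▸ B.mul_mem hux hyv),
    h.deg_eq hx hu h.one_mem (by rwa [mul_one]), h.deg_eq hy h.one_mem hv (by rwa [one_mul]),
    hassoc, h.nilDeg_mul hux hyv (mul_ne_zero (h.ne_zero hu) hx) (mul_ne_zero hy (h.ne_zero hv)),
    mul_one, one_mul, nilDeg_adOp_one L₀]
  push_cast
  ring

theorem deg_neg (h : AdNilpotentLocalization B S L₀) {x : A} (hx : x ≠ 0) :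
    h.deg (-x) = h.deg x := by
  obtain ⟨u, hu, hux⟩ := h.exists_left_mul_mem x
  rw [h.deg_eq hx hu h.one_mem (by rwa [mul_one]),
    h.deg_eq (neg_ne_zero.mpr hx) hu h.one_mem (by rw [mul_one, mul_neg]; exact B.neg_mem hux),
    mul_one, mul_one, mul_neg, nilDeg_adOp_neg]

theorem deg_add_le (h : AdNilpotentLocalization B S L₀) {x y : A} (hx : x ≠ 0) (hy : y ≠ 0)
    (hxy : x + y ≠ 0) : h.deg (x + y) ≤ max (h.deg x) (h.deg y) := by
  obtain ⟨u, hu, hux⟩ := h.exists_left_mul_mem x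
  obtain ⟨v, hv, hvy⟩ := h.exists_left_mul_mem y
  have hw : v * u ∈ S := h.mul_mem v hv u hu
  have hwx : v * u * x ∈ B := by rw [mul_assoc]; exact B.mul_mem (h.subset hv) hux
  have hwy : v * u * y ∈ B := by
    rw [h.comm v hv u hu, mul_assoc]; exact B.mul_mem (h.subset hu) hvy
  have hle := h.nilDeg_add_le hwx hwy
  rw [← mul_add] at hle
  rw [h.deg_eq hx hw h.one_mem (by rwa [mul_one]), h.deg_eq hy hw h.one_mem (by rwa [mul_one]),
    h.deg_eq hxy hw h.one_mem (by rw [mul_one, mul_add]; exact B.add_mem hwx hwy)]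
  simp only [mul_one]
  omega

theorem deg_add_lt (h : AdNilpotentLocalization B S L₀) {x y : A} {D : ℤ}
    (hx : x ≠ 0 → h.deg x < D) (hy : y ≠ 0 → h.deg y < D) (hxy : x + y ≠ 0) :
    h.deg (x + y) < D := by
  rcases eq_or_ne x 0 with rfl | hx0
  · rw [zero_add] at hxy ⊢; exact hy hxy
  rcases eq_or_ne y 0 with rfl | hy0
  · rw [add_zero] at hxy ⊢; exact hx hxy
  exact (h.deg_add_le hx0 hy0 hxy).trans_lt (max_lt (hx hx0) (hy hy0))

theorem deg_sub_lt (h : AdNilpotentLocalization B S L₀) {x y : A} {D : ℤ}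
    (hx : x ≠ 0 → h.deg x < D) (hy : y ≠ 0 → h.deg y < D) (hxy : x - y ≠ 0) :
    h.deg (x - y) < D := by
  rw [sub_eq_add_neg] at hxy ⊢
  exact h.deg_add_lt hx (fun hy0 => h.deg_neg (neg_ne_zero.mp hy0) ▸ hy (neg_ne_zero.mp hy0)) hxy

theorem deg_adOp_lt (h : AdNilpotentLocalization B S L₀) {x : A} (hx : adOp L₀ L₀ x ≠ 0) :
    h.deg (adOp L₀ L₀ x) < h.deg x := by
  have hx0 : x ≠ 0 := fun hx0 => hx (hx0 ▸ adOp_zero L₀ L₀)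
  obtain ⟨u, hu, hux⟩ := h.exists_left_mul_mem x
  have huB := h.subset hu
  have hadB : ∀ {b}, b ∈ B → adOp L₀ L₀ b ∈ B := fun hb =>
    B.sub_mem (B.mul_mem h.mem hb) (B.mul_mem hb h.mem)
  have hdeg_ux : h.deg (u * x) = h.deg u + h.deg x := h.deg_mul (h.ne_zero hu) hx0
  have hsplit : u * adOp L₀ L₀ x = adOp L₀ L₀ (u * x) - adOp L₀ L₀ u * x := by
    rw [adOp_mul L₀ L₀ L₀]; abel
  have key : h.deg (adOp L₀ L₀ (u * x) - adOp L₀ L₀ u * x) < h.deg u + h.deg x := by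
    refine h.deg_sub_lt (fun hne => ?_) (fun hne => ?_) ?_
    · rw [h.deg_of_mem (hadB hux) hne, ← hdeg_ux, h.deg_of_mem hux (mul_ne_zero (h.ne_zero hu) hx0)]
      exact_mod_cast (h.hasNilDeg hux (mul_ne_zero (h.ne_zero hu) hx0)).nilDeg_apply_lt
        (adOp_zero _ _) hne
    · have hadu : adOp L₀ L₀ u ≠ 0 := left_ne_zero_of_mul hne
      rw [h.deg_mul hadu hx0, h.deg_of_mem (hadB huB) hadu, h.deg_of_mem huB (h.ne_zero hu)]
      have := (h.hasNilDeg huB (h.ne_zero hu)).nilDeg_apply_lt (adOp_zero _ _) hadu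
      omega
    · rw [← hsplit]; exact mul_ne_zero (h.ne_zero hu) hx
  rw [← hsplit, h.deg_mul (h.ne_zero hu) hx] at key
  omega

theorem deg_adOp_lt_of_deg_sub (h : AdNilpotentLocalization B S L₀) {a b : A}
    (ha : a - L₀ ≠ 0 → h.deg (a - L₀) < 0) (hb : b - L₀ ≠ 0 → h.deg (b - L₀) < 0) (x : A)
    (hx : adOp a b x ≠ 0) : h.deg (adOp a b x) < h.deg x := by
  have hx0 : x ≠ 0 := fun hx0 => hx (hx0 ▸ adOp_zero a b)
  have hsplit : adOp a b x = adOp L₀ L₀ x + (a - L₀) * x - x * (b - L₀) := by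
    simp only [adOp]; noncomm_ring
  rw [hsplit] at hx ⊢
  refine h.deg_sub_lt (fun hne => h.deg_add_lt h.deg_adOp_lt (fun hne => ?_) hne)
    (fun hne => ?_) hx
  · rw [h.deg_mul (left_ne_zero_of_mul hne) hx0]
    linarith [ha (left_ne_zero_of_mul hne)]
  · rw [h.deg_mul hx0 (right_ne_zero_of_mul hne)]
    linarith [hb (right_ne_zero_of_mul hne)]

theorem exists_iterate_eq_zero (h : AdNilpotentLocalization B S L₀) {f : A → A}
    (hf : ∀ y, f y ≠ 0 → h.deg (f y) < h.deg y) {u v x : A} (hu : u ∈ S) (hv : v ∈ S)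
    (hB : ∀ n, u * f^[n] x * v ∈ B) : ∃ n, f^[n] x = 0 := by
  refine exists_iterate_eq_zero_of_lt hf (-(nilDeg (adOp L₀ L₀) u + nilDeg (adOp L₀ L₀) v))
    fun n hn => ?_
  rw [h.deg_eq hn hu hv (hB n)]
  omega

theorem hasNilDeg_adOp (h : AdNilpotentLocalization B S L₀) {a b : A}
    (ha : a - L₀ ≠ 0 → h.deg (a - L₀) < 0) (hb : b - L₀ ≠ 0 → h.deg (b - L₀) < 0) {u v x : A}
    (hx : x ≠ 0) (hu : u ∈ S) (hv : v ∈ S) (hB : ∀ n, u * (adOp a b)^[n] x * v ∈ B) :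
    HasNilDeg (adOp a b) x (nilDeg (adOp a b) x) :=
  hasNilDeg_nilDeg (adOp_zero a b) hx
    (h.exists_iterate_eq_zero (h.deg_adOp_lt_of_deg_sub ha hb) hu hv hB)

theorem deg_sub_neg_of_cond2 {k : Type*} [CommRing k] [Algebra k A] {B : Subalgebra k A}
    {L : A} (h : AdNilpotentLocalization B.toSubring S L₀) (h2 : cond2 B S L₀ L)
    (hL : L - L₀ ≠ 0) : h.deg (L - L₀) < 0 := by
  rcases h2 with hLL₀ | ⟨s', hs', hB, -, hdeg⟩
  · exact absurd (sub_eq_zero.mpr hLL₀) hL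
  rw [h.deg_eq hL hs' h.one_mem (by rwa [mul_one]), mul_one,
    nilDeg_adOp_one L₀]
  have : nilDeg (adOp L₀ L₀) (s' * (L - L₀)) < nilDeg (adOp L₀ L₀) s' := hdeg
  omega

end AdNilpotentLocalization

section Module

variable {A M : Type*} [Ring A] [AddCommGroup M] [Module A M] {V W : Set M}

theorem adOp_iterate_smul_mem (hW : ∀ w ∈ W, ∀ w' ∈ W, w - w' ∈ W) {a b x : A}
    (ha : ∀ w ∈ W, a • w ∈ W) (hb : ∀ v ∈ V, b • v ∈ V) (hx : ∀ v ∈ V, x • v ∈ W) (n : ℕ) :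
    ∀ v ∈ V, (adOp a b)^[n] x • v ∈ W := by
  induction n with
  | zero => exact hx
  | succ n ih =>
    intro v hv
    rw [Function.iterate_succ_apply', adOp, sub_smul, mul_smul, mul_smul]
    exact hW _ (ha _ (ih v hv)) _ (ih _ (hb v hv))

theorem mul_adOp_iterate_mul_smul_mem {U₀ : Set M} (hW : ∀ w ∈ W, ∀ w' ∈ W, w - w' ∈ W)
    {a b x u v : A} (ha : ∀ w ∈ W, a • w ∈ W) (hb : ∀ m ∈ V, b • m ∈ V)
    (hx : ∀ m ∈ V, x • m ∈ W) (hu : ∀ w ∈ W, u • w ∈ U₀) (hv : ∀ m ∈ U₀, v • m ∈ V) (n : ℕ) :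
    ∀ m ∈ U₀, (u * (adOp a b)^[n] x * v) • m ∈ U₀ := fun m hm => by
  rw [mul_smul, mul_smul]
  exact hu _ (adOp_iterate_smul_mem hW ha hb hx n _ (hv m hm))

theorem isSubspace.sub_mem {k : Type*} [CommRing k] [Algebra k A] {U : Set M}
    (hU : isSubspace k A U) : ∀ u ∈ U, ∀ v ∈ U, u - v ∈ U := by
  intro u hu v hv
  have hneg := hU.2.2 (-1) v hv
  rw [map_neg, map_one, neg_one_smul] at hneg
  exact sub_eq_add_neg u v ▸ hU.2.1 u hu _ hneg

end Module

theorem stmt11_general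
    {k A M : Type*} [Field k] [CharZero k] [Ring A] [IsDomain A] [Algebra k A]
    [AddCommGroup M] [Module A M]
    (B R : Subalgebra k A) (hRB : R ≤ B)
    (hRcomm : ∀ x ∈ R, ∀ y ∈ R, x * y = y * x)
    (S : Set A) (hSR : S ⊆ (R : Set A)) (hS0 : (0 : A) ∉ S) (hS1 : (1 : A) ∈ S)
    (hSmul : ∀ s ∈ S, ∀ t ∈ S, s * t ∈ S)
    (hleft : ∀ a : A, ∃ s ∈ S, s * a ∈ B)
    (hright : ∀ a : A, ∃ s ∈ S, a * s ∈ B)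
    (U₀ : Set M)
    (hU₀add : ∀ u ∈ U₀, ∀ v ∈ U₀, u + v ∈ U₀)
    (hU₀neg : ∀ u ∈ U₀, -u ∈ U₀)
    (hB : ∀ a : A, a ∈ B ↔ ∀ u ∈ U₀, a • u ∈ U₀)
    (L₀ : A) (hL₀ : L₀ ∈ B)
    (hnil : ∀ b ∈ B, ∃ n : ℕ, (adOp L₀ L₀)^[n] b = 0)
    (L : A) (h2 : cond2 B S L₀ L)
    (U : Set M) (hU : isSubspace k A U)
    (hLU : ∀ u ∈ U, L • u ∈ U)
    (s : A) (hs : s ∈ S)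
    (hsU₀ : ∀ u ∈ U₀, s • u ∈ U) (hsU : ∀ u ∈ U, s • u ∈ U₀) :
    -- (i) the shift operator S̄ = ad_{L,L₀}^[N] s exists, is nonzero, and L·S̄ = S̄·L₀
    ({n : ℕ | (adOp L L₀)^[n + 1] s = 0}.Nonempty ∧
     (adOp L L₀)^[sInf {n : ℕ | (adOp L L₀)^[n + 1] s = 0}] s ≠ 0 ∧
     L * (adOp L L₀)^[sInf {n : ℕ | (adOp L L₀)^[n + 1] s = 0}] s =
       (adOp L L₀)^[sInf {n : ℕ | (adOp L L₀)^[n + 1] s = 0}] s * L₀) ∧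
    -- (ii) for nonzero q ∈ Q, the minimal ad-nilpotency exponents N_q, N_{q,0} exist and agree
    (∀ q : A, q ∈ R → (∀ u ∈ U, q • u ∈ U) → q ≠ 0 →
      {n : ℕ | (adOp L L)^[n + 1] q = 0}.Nonempty ∧
      {n : ℕ | (adOp L₀ L₀)^[n + 1] q = 0}.Nonempty ∧
      sInf {n : ℕ | (adOp L L)^[n + 1] q = 0} =
        sInf {n : ℕ | (adOp L₀ L₀)^[n + 1] q = 0}) ∧
    -- (iii) the intertwining relation ad_L^[N_q](q) · S̄ = S̄ · ad_{L₀}^[N_{q,0}](q)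
    (∀ q : A, q ∈ R → (∀ u ∈ U, q • u ∈ U) → q ≠ 0 →
      (adOp L L)^[sInf {n : ℕ | (adOp L L)^[n + 1] q = 0}] q *
          (adOp L L₀)^[sInf {n : ℕ | (adOp L L₀)^[n + 1] s = 0}] s =
        (adOp L L₀)^[sInf {n : ℕ | (adOp L L₀)^[n + 1] s = 0}] s *
          (adOp L₀ L₀)^[sInf {n : ℕ | (adOp L₀ L₀)^[n + 1] q = 0}] q) ∧
    -- (iv) the operators L_q pairwise commute, and so do the L_{q,0}
    (∀ q q' : A, q ∈ R → (∀ u ∈ U, q • u ∈ U) → q ≠ 0 →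
      q' ∈ R → (∀ u ∈ U, q' • u ∈ U) → q' ≠ 0 →
      ((adOp L L)^[sInf {n : ℕ | (adOp L L)^[n + 1] q = 0}] q *
          (adOp L L)^[sInf {n : ℕ | (adOp L L)^[n + 1] q' = 0}] q' =
        (adOp L L)^[sInf {n : ℕ | (adOp L L)^[n + 1] q' = 0}] q' *
          (adOp L L)^[sInf {n : ℕ | (adOp L L)^[n + 1] q = 0}] q) ∧
      ((adOp L₀ L₀)^[sInf {n : ℕ | (adOp L₀ L₀)^[n + 1] q = 0}] q *
          (adOp L₀ L₀)^[sInf {n : ℕ | (adOp L₀ L₀)^[n + 1] q' = 0}] q' =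
        (adOp L₀ L₀)^[sInf {n : ℕ | (adOp L₀ L₀)^[n + 1] q' = 0}] q' *
          (adOp L₀ L₀)^[sInf {n : ℕ | (adOp L₀ L₀)^[n + 1] q = 0}] q)) := by
  have : CharZero A := charZero_of_injective_algebraMap (algebraMap k A).injective
  simp only [← nilDeg_def]
  have h : AdNilpotentLocalization B.toSubring S L₀ :=
    ⟨fun u hu => hRB (hSR hu), fun u hu v hv => hRcomm u (hSR hu) v (hSR hv), hS0, hS1, hSmul,
      hleft, hright, hL₀, hnil⟩
  have hLdeg := h.deg_sub_neg_of_cond2 h2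
  have hL₀deg : L₀ - L₀ ≠ 0 → h.deg (L₀ - L₀) < 0 := fun hne => absurd (sub_self L₀) hne
  have hU₀sub : ∀ u ∈ U₀, ∀ v ∈ U₀, u - v ∈ U₀ := fun u hu v hv =>
    sub_eq_add_neg u v ▸ hU₀add u hu _ (hU₀neg v hv)
  have hL₀U₀ : ∀ u ∈ U₀, L₀ • u ∈ U₀ := (hB L₀).mp hL₀
  have hone : ∀ {X : Set M}, ∀ m ∈ X, (1 : A) • m ∈ X := fun m hm => (one_smul A m).symm ▸ hm
  have hs_LL₀ := h.hasNilDeg_adOp hLdeg hL₀deg (h.ne_zero hs) hs hS1 fun n => (hB _).mpr <|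
    mul_adOp_iterate_mul_smul_mem hU.sub_mem hLU hL₀U₀ hsU₀ hsU hone n
  have hs_L₀L := h.hasNilDeg_adOp hL₀deg hLdeg (h.ne_zero hs) hS1 hs fun n => (hB _).mpr <|
    mul_adOp_iterate_mul_smul_mem hU₀sub hL₀U₀ hLU hsU hone hsU₀ n
  have hQ : ∀ q ∈ R, (∀ u ∈ U, q • u ∈ U) → q ≠ 0 →
      HasNilDeg (adOp L L) q (nilDeg (adOp L L) q) ∧
        HasNilDeg (adOp L₀ L₀) q (nilDeg (adOp L₀ L₀) q) ∧
        nilDeg (adOp L L) q = nilDeg (adOp L₀ L₀) q := by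
    intro q hqR hqU hq
    have hqL := h.hasNilDeg_adOp hLdeg hLdeg hq hs hs fun n => (hB _).mpr <|
      mul_adOp_iterate_mul_smul_mem hU.sub_mem hLU hLU hqU hsU hsU₀ n
    have hqL₀ := h.hasNilDeg (hRB hqR) hq
    exact ⟨hqL, hqL₀, hs_LL₀.eq_of_adOp hs_L₀L (h.hasNilDeg (h.subset hs) (h.ne_zero hs)) hqL hqL₀⟩
  refine ⟨⟨⟨_, hs_LL₀.2⟩, hs_LL₀.1, adOp_eq_zero_iff.mp (by simpa using hs_LL₀.iterate.2)⟩,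
    fun q hqR hqU hq => ?_, fun q hqR hqU hq => ?_, fun q q' hqR hqU hq hq'R hq'U hq' => ?_⟩
  · obtain ⟨hqL, hqL₀, heq⟩ := hQ q hqR hqU hq
    exact ⟨⟨_, hqL.2⟩, ⟨_, hqL₀.2⟩, heq⟩
  · obtain ⟨hqL, hqL₀, heq⟩ := hQ q hqR hqU hq
    rw [← heq] at hqL₀ ⊢
    exact adOp_iterate_mul_comm_of_commute (hRcomm q hqR s (hSR hs)) hqL.2 hs_LL₀.2 hqL₀.2
  · obtain ⟨hqL, hqL₀, -⟩ := hQ q hqR hqU hq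
    obtain ⟨hq'L, hq'L₀, -⟩ := hQ q' hq'R hq'U hq'
    have hqq' := hRcomm q hqR q' hq'R
    exact ⟨adOp_iterate_mul_comm_of_commute hqq' hqL.2 hq'L.2 hqL.2,
      adOp_iterate_mul_comm_of_commute hqq' hqL₀.2 hq'L₀.2 hqL₀.2⟩

/-- Proposition 4.8: the shift operator `S̄ = ad_{L,L₀}^[N] s` intertwines the commuting
families `L_q = ad_L^[N_q] q` and `L_{q,0} = ad_{L₀}^[N_{q,0}] q` for `q ∈ Q = {q ∈ R : q·U ⊆ U}`,
and `N_q = N_{q,0}`. -/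
theorem stmt11
    {k A M : Type*} [Field k] [CharZero k] [Ring A] [IsDomain A] [Algebra k A]
    [AddCommGroup M] [Module A M]
    (B R : Subalgebra k A) (hRB : R ≤ B)
    (hRcomm : ∀ x ∈ R, ∀ y ∈ R, x * y = y * x)
    (S : Set A) (hSR : S ⊆ (R : Set A)) (hS0 : (0 : A) ∉ S) (hS1 : (1 : A) ∈ S)
    (hSmul : ∀ s ∈ S, ∀ t ∈ S, s * t ∈ S)
    (hSunit : ∀ s ∈ S, IsUnit s)
    (hleft : ∀ a : A, ∃ s ∈ S, s * a ∈ B)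
    (hright : ∀ a : A, ∃ s ∈ S, a * s ∈ B)
    (U₀ : Set M) (hU₀0 : (0 : M) ∈ U₀)
    (hU₀add : ∀ u ∈ U₀, ∀ v ∈ U₀, u + v ∈ U₀)
    (hU₀neg : ∀ u ∈ U₀, -u ∈ U₀)
    (hU₀R : ∀ r ∈ (R : Set A), ∀ u ∈ U₀, r • u ∈ U₀)
    (hB : ∀ a : A, a ∈ B ↔ ∀ u ∈ U₀, a • u ∈ U₀)
    (L₀ : A) (hL₀ : L₀ ∈ B)
    (hnil : ∀ b ∈ B, ∃ n : ℕ, (adOp L₀ L₀)^[n] b = 0)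
    (L : A) (h2 : cond2 B S L₀ L)
    (U : Set M) (hU : isSubspace k A U)
    (hLU : ∀ u ∈ U, L • u ∈ U)
    (s : A) (hs : s ∈ S)
    (hsU₀ : ∀ u ∈ U₀, s • u ∈ U) (hsU : ∀ u ∈ U, s • u ∈ U₀) :
    -- (i) the shift operator S̄ = ad_{L,L₀}^[N] s exists, is nonzero, and L·S̄ = S̄·L₀
    ({n : ℕ | (adOp L L₀)^[n + 1] s = 0}.Nonempty ∧
     (adOp L L₀)^[sInf {n : ℕ | (adOp L L₀)^[n + 1] s = 0}] s ≠ 0 ∧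
     L * (adOp L L₀)^[sInf {n : ℕ | (adOp L L₀)^[n + 1] s = 0}] s =
       (adOp L L₀)^[sInf {n : ℕ | (adOp L L₀)^[n + 1] s = 0}] s * L₀) ∧
    -- (ii) for nonzero q ∈ Q, the minimal ad-nilpotency exponents N_q, N_{q,0} exist and agree
    (∀ q : A, q ∈ R → (∀ u ∈ U, q • u ∈ U) → q ≠ 0 →
      {n : ℕ | (adOp L L)^[n + 1] q = 0}.Nonempty ∧
      {n : ℕ | (adOp L₀ L₀)^[n + 1] q = 0}.Nonempty ∧
      sInf {n : ℕ | (adOp L L)^[n + 1] q = 0} =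
        sInf {n : ℕ | (adOp L₀ L₀)^[n + 1] q = 0}) ∧
    -- (iii) the intertwining relation ad_L^[N_q](q) · S̄ = S̄ · ad_{L₀}^[N_{q,0}](q)
    (∀ q : A, q ∈ R → (∀ u ∈ U, q • u ∈ U) → q ≠ 0 →
      (adOp L L)^[sInf {n : ℕ | (adOp L L)^[n + 1] q = 0}] q *
          (adOp L L₀)^[sInf {n : ℕ | (adOp L L₀)^[n + 1] s = 0}] s =
        (adOp L L₀)^[sInf {n : ℕ | (adOp L L₀)^[n + 1] s = 0}] s *
          (adOp L₀ L₀)^[sInf {n : ℕ | (adOp L₀ L₀)^[n + 1] q = 0}] q) ∧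
    -- (iv) the operators L_q pairwise commute, and so do the L_{q,0}
    (∀ q q' : A, q ∈ R → (∀ u ∈ U, q • u ∈ U) → q ≠ 0 →
      q' ∈ R → (∀ u ∈ U, q' • u ∈ U) → q' ≠ 0 →
      ((adOp L L)^[sInf {n : ℕ | (adOp L L)^[n + 1] q = 0}] q *
          (adOp L L)^[sInf {n : ℕ | (adOp L L)^[n + 1] q' = 0}] q' =
        (adOp L L)^[sInf {n : ℕ | (adOp L L)^[n + 1] q' = 0}] q' *
          (adOp L L)^[sInf {n : ℕ | (adOp L L)^[n + 1] q = 0}] q) ∧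
      ((adOp L₀ L₀)^[sInf {n : ℕ | (adOp L₀ L₀)^[n + 1] q = 0}] q *
          (adOp L₀ L₀)^[sInf {n : ℕ | (adOp L₀ L₀)^[n + 1] q' = 0}] q' =
        (adOp L₀ L₀)^[sInf {n : ℕ | (adOp L₀ L₀)^[n + 1] q' = 0}] q' *
          (adOp L₀ L₀)^[sInf {n : ℕ | (adOp L₀ L₀)^[n + 1] q = 0}] q)) :=
  stmt11_general B R hRB hRcomm S hSR hS0 hS1 hSmul hleft hright U₀ hU₀add hU₀neg hB L₀ hL₀ hnil L
    h2 U hU hLU s hs hsU₀ hsU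
end

section
/- Assume the Setup. Let L ∈ A satisfy condition (2), let U ⊆ M be a k-subspace satisfying condition (1) for L, and set Q := {q ∈ R : q·U ⊆ U}. For nonzero q ∈ Q let N_q (respectively N_{q,0}) denote the smallest integer with ad_{L}^{N_q+1}(q) = 0 (respectively ad_{L₀}^{N_{q,0}+1}(q) = 0). Then for all nonzero q, q′ ∈ Q: the product qq′ lies in Q, N_{qq′} = N_q + N_{q′} and N_{qq′,0} = N_{q,0} + N_{q′,0}, and moreover ad_{L}^{N_q+N_{q′}}(qq′) = C(N_q+N_{q′}, N_q)·ad_{L}^{N_q}(q)·ad_{L}^{N_{q′}}(q′) and ad_{L₀}^{N_{q,0}+N_{q′,0}}(qq′) = C(N_{q,0}+N_{q′,0}, N_{q,0})·ad_{L₀}^{N_{q,0}}(q)·ad_{L₀}^{N_{q′,0}}(q′). Equivalently, setting L_q := ad_{L}^{N_q}(q)/N_q! and L_{q,0} := ad_{L₀}^{N_{q,0}}(q)/N_{q,0}!, one has L_{qq′} = L_q·L_{q′} and L_{qq′,0} = L_{q,0}·L_{q′,0}. -/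
/-
The proof rests on the iterated Leibniz rule `D^[n] (x * y) = ∑ C(n, i) D^[i] x · D^[n-i] y`,
valid for any additive `D` with `D (x * y) = D x * y + x * D y`, in particular for `ad_L`.
If `D^[a+1] x = 0` and `D^[b+1] y = 0`, then at order `a + b` only the term `i = a` survives,
and at order `a + b + 1` none does. In a domain of characteristic zero the surviving term
`C(a+b, a) D^[a] x · D^[b] y` is nonzero, and dividing by `(a+b)! = C(a+b, a) a! b!` gives the
multiplicativity of the normalised leading terms.
-/

open Finset

section Leibniz

variable {A : Type*} [Ring A] {D : A →+ A}

theorem iterate_map_mul_of_leibniz (hD : ∀ x y, D (x * y) = D x * y + x * D y) (n : ℕ) (x y : A) :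
    D^[n] (x * y) = ∑ ij ∈ antidiagonal n, n.choose ij.1 • (D^[ij.1] x * D^[ij.2] y) := by
  induction n with
  | zero => simp
  | succ n ih =>
    rw [sum_antidiagonal_choose_succ_nsmul (fun i j => D^[i] x * D^[j] y) n]
    simp only [Function.iterate_succ_apply', ih, map_sum, map_nsmul, hD, smul_add,
      sum_add_distrib]
    rw [add_comm, add_left_cancel_iff]
    refine sum_congr rfl fun ⟨i, j⟩ hij => ?_
    rw [n.choose_symm_of_eq_add (HasAntidiagonal.mem_antidiagonal.1 hij).symm]

theorem iterate_mul_iterate_eq_zero {x y : A} {a b i j : ℕ} (hx : D^[a + 1] x = 0)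
    (hy : D^[b + 1] y = 0) (hij : a < i ∨ b < j) : D^[i] x * D^[j] y = 0 := by
  have vanish : ∀ {m n : ℕ} {z : A}, D^[m] z = 0 → m ≤ n → D^[n] z = 0 := by
    intro m n z hz hmn
    obtain ⟨c, rfl⟩ := Nat.exists_eq_add_of_le hmn
    rw [add_comm, Function.iterate_add_apply, hz, iterate_map_zero]
  rcases hij with hi | hj
  · rw [vanish hx hi, zero_mul]
  · rw [vanish hy hj, mul_zero]

variable (hD : ∀ x y, D (x * y) = D x * y + x * D y) {x y : A} {a b : ℕ}
  (hx : D^[a + 1] x = 0) (hy : D^[b + 1] y = 0)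
include hD hx hy

theorem iterate_add_map_mul_of_leibniz :
    D^[a + b] (x * y) = (a + b).choose a • (D^[a] x * D^[b] y) := by
  rw [iterate_map_mul_of_leibniz hD,
    sum_eq_single_of_mem (a, b) (HasAntidiagonal.mem_antidiagonal.2 rfl)]
  rintro ⟨i, j⟩ hij hne
  have hij' : a < i ∨ b < j := by
    rw [HasAntidiagonal.mem_antidiagonal] at hij
    rw [Ne, Prod.mk.injEq] at hne
    omega
  rw [iterate_mul_iterate_eq_zero hx hy hij', smul_zero]

theorem iterate_add_succ_map_mul_of_leibniz : D^[a + b + 1] (x * y) = 0 := by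
  rw [iterate_map_mul_of_leibniz hD]
  refine sum_eq_zero fun ⟨i, j⟩ hij => ?_
  have hij' : a < i ∨ b < j := by
    rw [HasAntidiagonal.mem_antidiagonal] at hij
    omega
  rw [iterate_mul_iterate_eq_zero hx hy hij', smul_zero]

variable [NoZeroDivisors A] [CharZero A]

theorem iterate_add_map_mul_ne_zero_of_leibniz (hx' : D^[a] x ≠ 0) (hy' : D^[b] y ≠ 0) :
    D^[a + b] (x * y) ≠ 0 := by
  rw [iterate_add_map_mul_of_leibniz hD hx hy]
  exact smul_ne_zero (Nat.choose_pos (Nat.le_add_right a b)).ne' (mul_ne_zero hx' hy')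

theorem eq_mul_of_factorial_nsmul_eq_iterate {Lx Ly Lxy : A} (hLx : a.factorial • Lx = D^[a] x)
    (hLy : b.factorial • Ly = D^[b] y) (hLxy : (a + b).factorial • Lxy = D^[a + b] (x * y)) :
    Lxy = Lx * Ly := by
  refine nsmul_right_injective (a + b).factorial_ne_zero ?_
  dsimp only
  rw [hLxy, iterate_add_map_mul_of_leibniz hD hx hy, ← hLx, ← hLy, smul_mul_smul_comm, smul_smul,
    Nat.choose_symm_add, ← Nat.mul_assoc, Nat.add_choose_mul_factorial_mul_factorial]

end Leibniz

theorem mulLeft_sub_mulRight_apply_mul {A : Type*} [Ring A] (L x y : A) :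
    (AddMonoidHom.mulLeft L - AddMonoidHom.mulRight L) (x * y) =
      (AddMonoidHom.mulLeft L - AddMonoidHom.mulRight L) x * y +
        x * (AddMonoidHom.mulLeft L - AddMonoidHom.mulRight L) y := by
  simp only [AddMonoidHom.sub_apply, AddMonoidHom.coe_mulLeft, AddMonoidHom.coe_mulRight]
  noncomm_ring

theorem stmt12_general
    {k A M : Type*} [Field k] [CharZero k] [Ring A] [IsDomain A] [Algebra k A]
    [AddCommGroup M] [Module A M]
    (R : Subalgebra k A)
    (L₀ : A)
    (L : A)
    (U : Set M)
    (q q' : A)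
    (hq : q ∈ R) (hqU : ∀ u ∈ U, q • u ∈ U)
    (hq' : q' ∈ R) (hq'U : ∀ u ∈ U, q' • u ∈ U)
    (Nq Nq' Nq₀ Nq'₀ : ℕ)
    (hNq : (adOp L L)^[Nq + 1] q = 0) (hNq' : (adOp L L)^[Nq] q ≠ 0)
    (hMq : (adOp L L)^[Nq' + 1] q' = 0) (hMq' : (adOp L L)^[Nq'] q' ≠ 0)
    (hNq₀ : (adOp L₀ L₀)^[Nq₀ + 1] q = 0) (hNq₀' : (adOp L₀ L₀)^[Nq₀] q ≠ 0)
    (hMq₀ : (adOp L₀ L₀)^[Nq'₀ + 1] q' = 0) (hMq₀' : (adOp L₀ L₀)^[Nq'₀] q' ≠ 0) :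
    -- q·q' lies in Q
    (q * q' ∈ R ∧ ∀ u ∈ U, (q * q') • u ∈ U) ∧
    -- N_{qq'} = N_q + N_{q'}
    ((adOp L L)^[Nq + Nq' + 1] (q * q') = 0 ∧ (adOp L L)^[Nq + Nq'] (q * q') ≠ 0) ∧
    -- N_{qq',0} = N_{q,0} + N_{q',0}
    ((adOp L₀ L₀)^[Nq₀ + Nq'₀ + 1] (q * q') = 0 ∧
      (adOp L₀ L₀)^[Nq₀ + Nq'₀] (q * q') ≠ 0) ∧
    -- binomial product formulas
    ((adOp L L)^[Nq + Nq'] (q * q') =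
      (Nq + Nq').choose Nq • ((adOp L L)^[Nq] q * (adOp L L)^[Nq'] q')) ∧
    ((adOp L₀ L₀)^[Nq₀ + Nq'₀] (q * q') =
      (Nq₀ + Nq'₀).choose Nq₀ • ((adOp L₀ L₀)^[Nq₀] q * (adOp L₀ L₀)^[Nq'₀] q')) ∧
    -- equivalently, L_{qq'} = L_q · L_{q'}
    (∀ Lq Lq' Lqq' : A,
      Nq.factorial • Lq = (adOp L L)^[Nq] q →
      Nq'.factorial • Lq' = (adOp L L)^[Nq'] q' →
      (Nq + Nq').factorial • Lqq' = (adOp L L)^[Nq + Nq'] (q * q') →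
      Lqq' = Lq * Lq') ∧
    -- and L_{qq',0} = L_{q,0} · L_{q',0}
    (∀ Lq Lq' Lqq' : A,
      Nq₀.factorial • Lq = (adOp L₀ L₀)^[Nq₀] q →
      Nq'₀.factorial • Lq' = (adOp L₀ L₀)^[Nq'₀] q' →
      (Nq₀ + Nq'₀).factorial • Lqq' = (adOp L₀ L₀)^[Nq₀ + Nq'₀] (q * q') →
      Lqq' = Lq * Lq') := by
  have : CharZero A := charZero_of_injective_algebraMap (algebraMap k A).injective
  -- `adOp L L` is definitionally `⇑(mulLeft L - mulRight L)`, so the lemmas on `D` apply.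
  have hD := mulLeft_sub_mulRight_apply_mul L
  have hD₀ := mulLeft_sub_mulRight_apply_mul L₀
  refine ⟨⟨mul_mem hq hq', fun u hu => mul_smul q q' u ▸ hqU _ (hq'U u hu)⟩,
    ⟨iterate_add_succ_map_mul_of_leibniz hD hNq hMq,
      iterate_add_map_mul_ne_zero_of_leibniz hD hNq hMq hNq' hMq'⟩,
    ⟨iterate_add_succ_map_mul_of_leibniz hD₀ hNq₀ hMq₀,
      iterate_add_map_mul_ne_zero_of_leibniz hD₀ hNq₀ hMq₀ hNq₀' hMq₀'⟩,
    iterate_add_map_mul_of_leibniz hD hNq hMq, iterate_add_map_mul_of_leibniz hD₀ hNq₀ hMq₀,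
    fun _ _ _ => eq_mul_of_factorial_nsmul_eq_iterate hD hNq hMq,
    fun _ _ _ => eq_mul_of_factorial_nsmul_eq_iterate hD₀ hNq₀ hMq₀⟩

/-- Multiplicativity underlying Corollary 4.10: for nonzero `q, q' ∈ Q = {q ∈ R : q·U ⊆ U}`,
with `N_q` (resp. `N_{q,0}`) the smallest exponent killing `q` under `ad_L` (resp. `ad_{L₀}`),
one has `qq' ∈ Q`, the exponents add up, the top iterated ad's multiply with a binomial
coefficient, and consequently `L_{qq'} = L_q·L_{q'}` and `L_{qq',0} = L_{q,0}·L_{q',0}`. -/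
theorem stmt12
    {k A M : Type*} [Field k] [CharZero k] [Ring A] [IsDomain A] [Algebra k A]
    [AddCommGroup M] [Module A M]
    (B R : Subalgebra k A) (hRB : R ≤ B)
    (hRcomm : ∀ x ∈ R, ∀ y ∈ R, x * y = y * x)
    (S : Set A) (hSR : S ⊆ (R : Set A)) (hS0 : (0 : A) ∉ S) (hS1 : (1 : A) ∈ S)
    (hSmul : ∀ s ∈ S, ∀ t ∈ S, s * t ∈ S)
    (hSunit : ∀ s ∈ S, IsUnit s)
    (hleft : ∀ a : A, ∃ s ∈ S, s * a ∈ B)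
    (hright : ∀ a : A, ∃ s ∈ S, a * s ∈ B)
    (U₀ : Set M) (hU₀0 : (0 : M) ∈ U₀)
    (hU₀add : ∀ u ∈ U₀, ∀ v ∈ U₀, u + v ∈ U₀)
    (hU₀neg : ∀ u ∈ U₀, -u ∈ U₀)
    (hU₀R : ∀ r ∈ (R : Set A), ∀ u ∈ U₀, r • u ∈ U₀)
    (hB : ∀ a : A, a ∈ B ↔ ∀ u ∈ U₀, a • u ∈ U₀)
    (L₀ : A) (hL₀ : L₀ ∈ B)
    (hnil : ∀ b ∈ B, ∃ n : ℕ, (adOp L₀ L₀)^[n] b = 0)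
    (L : A) (h2 : cond2 B S L₀ L)
    (U : Set M) (hU : isSubspace k A U)
    (hLU : ∀ u ∈ U, L • u ∈ U)
    (hcond1b : ∃ s ∈ S, (∀ u ∈ U₀, s • u ∈ U) ∧ (∀ u ∈ U, s • u ∈ U₀))
    (q q' : A)
    (hq : q ∈ R) (hqU : ∀ u ∈ U, q • u ∈ U) (hq0 : q ≠ 0)
    (hq' : q' ∈ R) (hq'U : ∀ u ∈ U, q' • u ∈ U) (hq'0 : q' ≠ 0)
    (Nq Nq' Nq₀ Nq'₀ : ℕ)
    (hNq : (adOp L L)^[Nq + 1] q = 0) (hNq' : (adOp L L)^[Nq] q ≠ 0)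
    (hMq : (adOp L L)^[Nq' + 1] q' = 0) (hMq' : (adOp L L)^[Nq'] q' ≠ 0)
    (hNq₀ : (adOp L₀ L₀)^[Nq₀ + 1] q = 0) (hNq₀' : (adOp L₀ L₀)^[Nq₀] q ≠ 0)
    (hMq₀ : (adOp L₀ L₀)^[Nq'₀ + 1] q' = 0) (hMq₀' : (adOp L₀ L₀)^[Nq'₀] q' ≠ 0) :
    -- q·q' lies in Q
    (q * q' ∈ R ∧ ∀ u ∈ U, (q * q') • u ∈ U) ∧
    -- N_{qq'} = N_q + N_{q'}
    ((adOp L L)^[Nq + Nq' + 1] (q * q') = 0 ∧ (adOp L L)^[Nq + Nq'] (q * q') ≠ 0) ∧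
    -- N_{qq',0} = N_{q,0} + N_{q',0}
    ((adOp L₀ L₀)^[Nq₀ + Nq'₀ + 1] (q * q') = 0 ∧
      (adOp L₀ L₀)^[Nq₀ + Nq'₀] (q * q') ≠ 0) ∧
    -- binomial product formulas
    ((adOp L L)^[Nq + Nq'] (q * q') =
      (Nq + Nq').choose Nq • ((adOp L L)^[Nq] q * (adOp L L)^[Nq'] q')) ∧
    ((adOp L₀ L₀)^[Nq₀ + Nq'₀] (q * q') =
      (Nq₀ + Nq'₀).choose Nq₀ • ((adOp L₀ L₀)^[Nq₀] q * (adOp L₀ L₀)^[Nq'₀] q')) ∧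
    -- equivalently, L_{qq'} = L_q · L_{q'}
    (∀ Lq Lq' Lqq' : A,
      Nq.factorial • Lq = (adOp L L)^[Nq] q →
      Nq'.factorial • Lq' = (adOp L L)^[Nq'] q' →
      (Nq + Nq').factorial • Lqq' = (adOp L L)^[Nq + Nq'] (q * q') →
      Lqq' = Lq * Lq') ∧
    -- and L_{qq',0} = L_{q,0} · L_{q',0}
    (∀ Lq Lq' Lqq' : A,
      Nq₀.factorial • Lq = (adOp L₀ L₀)^[Nq₀] q →
      Nq'₀.factorial • Lq' = (adOp L₀ L₀)^[Nq'₀] q' →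
      (Nq₀ + Nq'₀).factorial • Lqq' = (adOp L₀ L₀)^[Nq₀ + Nq'₀] (q * q') →
      Lqq' = Lq * Lq') :=
  stmt12_general R L₀ L U q q' hq hqU hq' hq'U Nq Nq' Nq₀ Nq'₀ hNq hNq' hMq hMq' hNq₀ hNq₀' hMq₀
    hMq₀'
end

section
/- Let n ≥ 1 and let B(x, y) = Σᵢ xᵢyᵢ denote the standard symmetric bilinear form on ℂⁿ. Let A₊ ⊆ ℂⁿ be a finite set of pairwise non-proportional vectors with B(α, α) ≠ 0 for all α ∈ A₊, let R₊ ⊆ A₊ be a subset, and let k : A₊ → ℂ be a multiplicity function with k_α a positive integer for every α ∈ A₊ \ R₊. For α ∈ A₊ \ R₊, 1 ≤ j ≤ k_α, and a subset C ⊆ A₊ containing α, say the locus condition L_C(α, j) holds if for every x ∈ ℂⁿ with B(α, x) = 0 and B(β, x) ≠ 0 for all β ∈ C \ {α}, one has Σ_{β ∈ C \ {α}} k_β(k_β+1)·B(β, β)·B(α, β)^{2j−1} / B(β, x)^{2j+1} = 0. Then the following are equivalent: (a) L_{A₊}(α, j) holds for every α ∈ A₊ \ R₊ and every 1 ≤ j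 ≤ k_α; (b) for every two-dimensional linear subspace V′ ⊆ ℂⁿ, every α ∈ (A₊ \ R₊) ∩ V′ and every 1 ≤ j ≤ k_α, the condition L_{A₊ ∩ V′}(α, j) holds. -/
open Classical

/-- The standard symmetric bilinear form `B(x,y) = Σᵢ xᵢ yᵢ` on `ℂⁿ`. -/
noncomputable def Bform {n : ℕ} (x y : Fin n → ℂ) : ℂ := ∑ i, x i * y i

/-- The locus condition `L_C(α, j)` for a configuration `C` with multiplicities `kk`. -/
def locusCond {n : ℕ} (C : Finset (Fin n → ℂ)) (kk : (Fin n → ℂ) → ℂ)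
    (α : Fin n → ℂ) (j : ℕ) : Prop :=
  ∀ x : Fin n → ℂ, Bform α x = 0 → (∀ β ∈ C.erase α, Bform β x ≠ 0) →
    ∑ β ∈ C.erase α,
      kk β * (kk β + 1) * Bform β β * (Bform α β) ^ (2 * j - 1) / (Bform β x) ^ (2 * j + 1)
      = 0

/-! Given a subspace `V ∋ α`, choose `z` that is `B`-orthogonal to `V` but to no vector of `C`
outside `V`. Along `x + r • z` the terms of the locus sum coming from `V` stay fixed while the
others tend to `0` as `r → ∞`, so the sum over `(C ∩ V) \ {α}` vanishes. Conversely, grouping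
`β ∈ C \ {α}` by the plane `span {α, β}` splits the locus sum of `C` into locus sums of its
two-dimensional sub-configurations. -/

open Filter Module Bornology Submodule Topology

theorem Subspace.exists_mem_dualAnnihilator_forall_apply_ne_zero {K M : Type*} [Field K]
    [Infinite K] [AddCommGroup M] [Module K M] (W : Subspace K M) (T : Finset M)
    (hT : ∀ v ∈ T, v ∉ W) : ∃ f ∈ W.dualAnnihilator, ∀ v ∈ T, f v ≠ 0 := by
  obtain ⟨f, hfW, hf⟩ := Dual.exists_forall_mem_ne_zero_of_forall_exists W.dualAnnihilator
    (fun v : T => Dual.eval K M v) fun v => by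
      by_contra! h
      exact hT v v.2 ((Subspace.forall_mem_dualAnnihilator_apply_eq_zero_iff W v).mp h)
  exact ⟨f, hfW, fun v hv => hf ⟨v, hv⟩⟩

theorem finrank_span_pair {K M : Type*} [DivisionRing K] [AddCommGroup M] [Module K M]
    {x y : M} (h : LinearIndependent K ![x, y]) : finrank K (span K {x, y}) = 2 := by
  rw [← Matrix.range_cons_cons_empty x y ![], finrank_span_eq_card h, Fintype.card_fin]

theorem span_pair_eq_of_mem {K M : Type*} [DivisionRing K] [AddCommGroup M] [Module K M]
    {x y y' : M} (h : LinearIndependent K ![x, y]) (h' : LinearIndependent K ![x, y'])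
    (hy : y ∈ span K {x, y'}) : span K {x, y} = span K {x, y'} :=
  haveI := FiniteDimensional.span_of_finite K (Set.toFinite {x, y'})
  eq_of_le_of_finrank_eq (span_le.mpr (Set.insert_subset (subset_span (by simp))
    (Set.singleton_subset_iff.mpr hy))) (by rw [finrank_span_pair h, finrank_span_pair h'])

section Cobounded

variable {𝕜 : Type*} [NormedField 𝕜] {a : 𝕜} (b : 𝕜)

theorem tendsto_add_mul_cobounded (ha : a ≠ 0) :
    Tendsto (fun r => b + r * a) (cobounded 𝕜) (cobounded 𝕜) :=
  (tendsto_const_add_cobounded b).comp (tendsto_mul_right_cobounded ha)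

theorem tendsto_div_add_mul_pow_cobounded (c : 𝕜) (ha : a ≠ 0) {N : ℕ} (hN : N ≠ 0) :
    Tendsto (fun r => c / (b + r * a) ^ N) (cobounded 𝕜) (𝓝 0) := by
  simpa [div_eq_mul_inv] using (tendsto_inv₀_cobounded.comp
    ((tendsto_pow_cobounded_cobounded hN).comp (tendsto_add_mul_cobounded b ha))).const_mul c

theorem eventually_add_mul_ne_zero_cobounded (ha : a ≠ 0) :
    ∀ᶠ r in cobounded 𝕜, b + r * a ≠ 0 :=
  tendsto_add_mul_cobounded b ha (isBounded_singleton (x := 0)).compl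

end Cobounded

section Bform

variable {n : ℕ}

theorem Bform_eq_dotProduct (x y : Fin n → ℂ) : Bform x y = x ⬝ᵥ y := rfl

theorem Bform_add_smul (v x z : Fin n → ℂ) (c : ℂ) :
    Bform v (x + c • z) = Bform v x + c * Bform v z := by
  simp [Bform_eq_dotProduct, dotProduct_add, dotProduct_smul]

theorem exists_Bform_eq_zero_forall_ne_zero (V : Submodule ℂ (Fin n → ℂ))
    (T : Finset (Fin n → ℂ)) (hT : ∀ γ ∈ T, γ ∉ V) :
    ∃ z, (∀ v ∈ V, Bform v z = 0) ∧ ∀ γ ∈ T, Bform γ z ≠ 0 := by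
  obtain ⟨f, hfV, hfT⟩ := Subspace.exists_mem_dualAnnihilator_forall_apply_ne_zero V T hT
  set z := (dotProductEquiv ℂ (Fin n)).symm f
  have hz : ∀ v, Bform v z = f v := fun v => by
    rw [Bform_eq_dotProduct, dotProduct_comm, ← (dotProductEquiv ℂ (Fin n)).apply_symm_apply f]
    rfl
  exact ⟨z, fun v hv => (hz v).trans ((mem_dualAnnihilator f).mp hfV v hv),
    fun γ hγ => (hz γ).trans_ne (hfT γ hγ)⟩

end Bform

section Locus

variable {n : ℕ} {C : Finset (Fin n → ℂ)} {kk : (Fin n → ℂ) → ℂ} {α : Fin n → ℂ} {j : ℕ}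

theorem locusCond_filter_mem {V : Submodule ℂ (Fin n → ℂ)} (hαV : α ∈ V)
    (h : locusCond C kk α j) : locusCond (C.filter (· ∈ V)) kk α j := by
  intro x hx hxV
  set T := (C.erase α).filter (· ∉ V)
  obtain ⟨z, hzV, hzT⟩ := exists_Bform_eq_zero_forall_ne_zero V T fun γ hγ =>
    (Finset.mem_filter.mp hγ).2
  set w : (Fin n → ℂ) → ℂ := fun β => kk β * (kk β + 1) * Bform β β * Bform α β ^ (2 * j - 1)
  set S := ∑ β ∈ (C.filter (· ∈ V)).erase α, w β / Bform β x ^ (2 * j + 1)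
  set g := fun r : ℂ => ∑ γ ∈ T, w γ / (Bform γ x + r * Bform γ z) ^ (2 * j + 1)
  have hg : Tendsto g (cobounded ℂ) (𝓝 0) := by
    simpa using tendsto_finsetSum T fun γ hγ =>
      tendsto_div_add_mul_pow_cobounded _ (w γ) (hzT γ hγ) (Nat.succ_ne_zero _)
  have hSg : ∀ᶠ r in cobounded ℂ, S + g r = 0 := by
    have hT : ∀ᶠ r in cobounded ℂ, ∀ γ ∈ T, Bform γ x + r * Bform γ z ≠ 0 :=
      (eventually_all_finset T).mpr fun γ hγ =>
        eventually_add_mul_ne_zero_cobounded _ (hzT γ hγ)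
    filter_upwards [hT] with r hr
    have hfull := h (x + r • z) (by rw [Bform_add_smul, hx, hzV α hαV, mul_zero, add_zero])
      fun β hβ => by
        by_cases hβV : β ∈ V
        · rw [Bform_add_smul, hzV β hβV, mul_zero, add_zero]
          exact hxV β (by rw [← Finset.filter_erase]; exact Finset.mem_filter.mpr ⟨hβ, hβV⟩)
        · rw [Bform_add_smul]
          exact hr β (Finset.mem_filter.mpr ⟨hβ, hβV⟩)
    rw [← Finset.sum_filter_add_sum_filter_not _ (· ∈ V), Finset.filter_erase] at hfull
    convert hfull using 2
    · refine Finset.sum_congr rfl fun β hβ => ?_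
      rw [Bform_add_smul, hzV β (Finset.mem_filter.mp (Finset.mem_of_mem_erase hβ)).2,
        mul_zero, add_zero]
    · exact Finset.sum_congr rfl fun γ _ => by rw [Bform_add_smul]
  have hS : S + 0 = 0 :=
    tendsto_nhds_unique (tendsto_const_nhds.add hg) (tendsto_const_nhds.congr' (hSg.mono fun _ hr => hr.symm))
  simpa using hS

theorem locusCond_of_forall_finrank_eq_two
    (hC : ∀ β ∈ C.erase α, LinearIndependent ℂ ![α, β])
    (h : ∀ V : Submodule ℂ (Fin n → ℂ), finrank ℂ V = 2 → α ∈ V →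
      locusCond (C.filter (· ∈ V)) kk α j) :
    locusCond C kk α j := by
  intro x hx hxC
  let plane : (Fin n → ℂ) → Submodule ℂ (Fin n → ℂ) := fun β => span ℂ {α, β}
  rw [← Finset.sum_fiberwise_of_maps_to (g := plane) fun β hβ => Finset.mem_image_of_mem plane hβ]
  refine Finset.sum_eq_zero fun V hV => ?_
  obtain ⟨β₀, hβ₀, rfl⟩ := Finset.mem_image.mp hV
  have hfiber : (C.erase α).filter (fun β => plane β = plane β₀) =
      (C.filter (· ∈ plane β₀)).erase α := by
    ext β
    simp only [Finset.mem_filter, Finset.mem_erase]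
    constructor
    · rintro ⟨⟨hβα, hβC⟩, hβ⟩
      exact ⟨hβα, hβC, hβ ▸ subset_span (by simp)⟩
    · rintro ⟨hβα, hβC, hβ⟩
      exact ⟨⟨hβα, hβC⟩, span_pair_eq_of_mem (hC β (Finset.mem_erase.mpr ⟨hβα, hβC⟩))
        (hC β₀ hβ₀) hβ⟩
  rw [hfiber]
  exact h _ (finrank_span_pair (hC β₀ hβ₀)) (subset_span (by simp)) x hx fun β hβ =>
    hxC β (Finset.erase_subset_erase α (Finset.filter_subset _ C) hβ)

end Locus

theorem stmt13_general {n : ℕ}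
    (Aplus Rplus : Finset (Fin n → ℂ))
    (hprop : ∀ α ∈ Aplus, ∀ β ∈ Aplus, α ≠ β → ∀ c : ℂ, α ≠ c • β)
    (hiso : ∀ α ∈ Aplus, Bform α α ≠ 0)
    (kk : (Fin n → ℂ) → ℂ) (m : (Fin n → ℂ) → ℕ) :
    (∀ α ∈ Aplus, α ∉ Rplus → ∀ j : ℕ, 1 ≤ j → j ≤ m α → locusCond Aplus kk α j)
    ↔
    (∀ V' : Submodule ℂ (Fin n → ℂ), Module.finrank ℂ V' = 2 →
      ∀ α ∈ Aplus, α ∉ Rplus → α ∈ V' → ∀ j : ℕ, 1 ≤ j → j ≤ m α →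
        locusCond (Aplus.filter (fun v => v ∈ V')) kk α j) := by
  constructor
  · intro h V _ α hαA hαR hαV j hj hjm
    exact locusCond_filter_mem hαV (h α hαA hαR j hj hjm)
  · intro h α hαA hαR j hj hjm
    refine locusCond_of_forall_finrank_eq_two (fun β hβ => ?_)
      fun V hV hαV => h V hV α hαA hαR hαV j hj hjm
    obtain ⟨hβα, hβA⟩ := Finset.mem_erase.mp hβ
    refine linearIndependent_fin2.mpr ⟨?_, fun c hc => hprop α hαA β hβA hβα.symm c hc.symm⟩
    rintro rfl
    exact hiso 0 hβA (by simp [Bform])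

/-- Proposition 6.1: a configuration satisfies the locus conditions if and only if each of its
two-dimensional sub-configurations does. -/
theorem stmt13 {n : ℕ} (hn : 1 ≤ n)
    (Aplus Rplus : Finset (Fin n → ℂ)) (hRA : Rplus ⊆ Aplus)
    (hprop : ∀ α ∈ Aplus, ∀ β ∈ Aplus, α ≠ β → ∀ c : ℂ, α ≠ c • β)
    (hiso : ∀ α ∈ Aplus, Bform α α ≠ 0)
    (kk : (Fin n → ℂ) → ℂ) (m : (Fin n → ℂ) → ℕ)
    (hint : ∀ α ∈ Aplus, α ∉ Rplus → kk α = (m α : ℂ) ∧ 1 ≤ m α) :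
    (∀ α ∈ Aplus, α ∉ Rplus → ∀ j : ℕ, 1 ≤ j → j ≤ m α → locusCond Aplus kk α j)
    ↔
    (∀ V' : Submodule ℂ (Fin n → ℂ), Module.finrank ℂ V' = 2 →
      ∀ α ∈ Aplus, α ∉ Rplus → α ∈ V' → ∀ j : ℕ, 1 ≤ j → j ≤ m α →
        locusCond (Aplus.filter (fun v => v ∈ V')) kk α j) :=
  stmt13_general Aplus Rplus hprop hiso kk m
end

section
/- Let n₁, n₂, n₃ ≥ 0 be integers and a, b, c ∈ ℂ \ {0} with a² + b² ≠ 0. For d ≥ 1 define the deformed power sum p_d ∈ ℂ[x₁,…,x_{n₁}, x′₁,…,x′_{n₂}, x″₁,…,x″_{n₃}] by p_d = a^{d−2}·Σ_{i=1}^{n₁} xᵢ^d + b^{d−2}·Σ_{i=1}^{n₂} (x′ᵢ)^d + c^{d−2}·Σ_{i=1}^{n₃} (x″ᵢ)^d. Fix 1 ≤ i ≤ n₁ and 1 ≤ j ≤ n₂, let α = a·eᵢ − b·e′_j (so B(α, x) = a·xᵢ − b·x′_j and B(α, α) = a² + b², where B is the standard symmetric bilinear form), and let s_α(x) = x − 2·(B(α,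 x)/B(α, α))·α. Then the polynomial p_d − p_d ∘ s_α is divisible by B(α, x)² in the polynomial ring. -/
/-!
Only the coordinates `xᵢ` and `x′ⱼ` are moved by `s_α`, each by a multiple of `β = a xᵢ - b x′ⱼ`.
Modulo `β²` one has `(x - h)^d ≡ x^d - d h x^(d-1)` for `β ∣ h`, so
`p_d - p_d ∘ s_α ≡ (2d / (a² + b²)) β ((a xᵢ)^(d-1) - (b x′ⱼ)^(d-1))`,
and `β` divides the last factor.
-/

open MvPolynomial

/-- The deformed power sum
`p_d = a^{d−2} Σ xᵢ^d + b^{d−2} Σ (x′ᵢ)^d + c^{d−2} Σ (x″ᵢ)^d`. -/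
noncomputable def pSum (n₁ n₂ n₃ : ℕ) (a b c : ℂ) (d : ℕ) :
    MvPolynomial (Fin n₁ ⊕ Fin n₂ ⊕ Fin n₃) ℂ :=
  C (a ^ ((d : ℤ) - 2)) * ∑ i : Fin n₁, (X (Sum.inl i)) ^ d
    + C (b ^ ((d : ℤ) - 2)) * ∑ i : Fin n₂, (X (Sum.inr (Sum.inl i))) ^ d
    + C (c ^ ((d : ℤ) - 2)) * ∑ i : Fin n₃, (X (Sum.inr (Sum.inr i))) ^ d

/-- The coefficients of the vector `α = a·eᵢ − b·e′ⱼ`. -/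
noncomputable def alphaCoef (n₁ n₂ n₃ : ℕ) (a b : ℂ) (i : Fin n₁) (j : Fin n₂) :
    (Fin n₁ ⊕ Fin n₂ ⊕ Fin n₃) → ℂ :=
  fun l => if l = Sum.inl i then a else if l = Sum.inr (Sum.inl j) then -b else 0

/-- The substitution of variables corresponding to the reflection
`s_α(x) = x − 2(B(α,x)/B(α,α))·α` for `α = a·eᵢ − b·e′ⱼ` (so `B(α,α) = a² + b²`). -/
noncomputable def reflSubst (n₁ n₂ n₃ : ℕ) (a b : ℂ) (i : Fin n₁) (j : Fin n₂) :
    (Fin n₁ ⊕ Fin n₂ ⊕ Fin n₃) → MvPolynomial (Fin n₁ ⊕ Fin n₂ ⊕ Fin n₃) ℂ :=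
  fun l => X l - C (2 * alphaCoef n₁ n₂ n₃ a b i j l / (a ^ 2 + b ^ 2)) *
    (C a * X (Sum.inl i) - C b * X (Sum.inr (Sum.inl j)))

theorem zpow_natCast_sub_two_mul_self {K : Type*} [GroupWithZero K] {a : K} (ha : a ≠ 0)
    {d : ℕ} (hd : 1 ≤ d) : a ^ ((d : ℤ) - 2) * a = a ^ (d - 1) := by
  rw [← zpow_add_one₀ ha, ← zpow_natCast, Nat.cast_sub hd]
  ring_nf

theorem sq_dvd_reflection_defect {R : Type*} [CommRing R] (A B κ wA wB x y : R) {d : ℕ}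
    (hA : wA * A = A ^ (d - 1)) (hB : wB * B = B ^ (d - 1)) :
    (A * x - B * y) ^ 2 ∣ wA * (x ^ d - (x - κ * A * (A * x - B * y)) ^ d)
      + wB * (y ^ d - (y + κ * B * (A * x - B * y)) ^ d) := by
  set β := A * x - B * y
  obtain ⟨q₁, hq₁⟩ := sq_dvd_add_pow_sub_sub (-(κ * A * β)) x d
  obtain ⟨q₂, hq₂⟩ := sq_dvd_add_pow_sub_sub (κ * B * β) y d
  obtain ⟨q₃, hq₃⟩ := sub_dvd_pow_sub_pow (A * x) (B * y) (d - 1)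
  refine ⟨d * κ * q₃ - wA * (κ * A) ^ 2 * q₁ - wB * (κ * B) ^ 2 * q₂, ?_⟩
  linear_combination -wA * hq₁ - wB * hq₂ + d * κ * β * hq₃ + d * κ * β * x ^ (d - 1) * hA
    - d * κ * β * y ^ (d - 1) * hB

section Reflection

variable {n₁ n₂ n₃ : ℕ} (a b : ℂ) (i : Fin n₁) (j : Fin n₂)

theorem reflSubst_inl_self :
    reflSubst n₁ n₂ n₃ a b i j (Sum.inl i) = X (Sum.inl i) -
      C (2 / (a ^ 2 + b ^ 2)) * C a * (C a * X (Sum.inl i) - C b * X (Sum.inr (Sum.inl j))) := by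
  simp only [reflSubst, alphaCoef, if_true, mul_div_right_comm, C_mul]

theorem reflSubst_inr_inl_self :
    reflSubst n₁ n₂ n₃ a b i j (Sum.inr (Sum.inl j)) = X (Sum.inr (Sum.inl j)) +
      C (2 / (a ^ 2 + b ^ 2)) * C b * (C a * X (Sum.inl i) - C b * X (Sum.inr (Sum.inl j))) := by
  simp only [reflSubst, alphaCoef, reduceCtorEq, if_false, if_true, mul_neg, neg_div,
    mul_div_right_comm, map_neg, C_mul]
  ring

theorem reflSubst_inl_of_ne {i' : Fin n₁} (h : i' ≠ i) :
    reflSubst n₁ n₂ n₃ a b i j (Sum.inl i') = X (Sum.inl i') := by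
  simp [reflSubst, alphaCoef, h]

theorem reflSubst_inr_inl_of_ne {j' : Fin n₂} (h : j' ≠ j) :
    reflSubst n₁ n₂ n₃ a b i j (Sum.inr (Sum.inl j')) = X (Sum.inr (Sum.inl j')) := by
  simp [reflSubst, alphaCoef, h]

theorem reflSubst_inr_inr (k : Fin n₃) :
    reflSubst n₁ n₂ n₃ a b i j (Sum.inr (Sum.inr k)) = X (Sum.inr (Sum.inr k)) := by
  simp [reflSubst, alphaCoef]

theorem pSum_sub_bind₁_reflSubst (c : ℂ) (d : ℕ) :
    pSum n₁ n₂ n₃ a b c d - bind₁ (reflSubst n₁ n₂ n₃ a b i j) (pSum n₁ n₂ n₃ a b c d) =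
      C (a ^ ((d : ℤ) - 2)) *
          (X (Sum.inl i) ^ d - reflSubst n₁ n₂ n₃ a b i j (Sum.inl i) ^ d) +
        C (b ^ ((d : ℤ) - 2)) *
          (X (Sum.inr (Sum.inl j)) ^ d - reflSubst n₁ n₂ n₃ a b i j (Sum.inr (Sum.inl j)) ^ d) := by
  have hx : ∑ i', X (Sum.inl i') ^ d - ∑ i', reflSubst n₁ n₂ n₃ a b i j (Sum.inl i') ^ d =
      X (Sum.inl i) ^ d - reflSubst n₁ n₂ n₃ a b i j (Sum.inl i) ^ d := by
    rw [← Finset.sum_sub_distrib]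
    exact Fintype.sum_eq_single i fun i' hi' => by rw [reflSubst_inl_of_ne a b i j hi', sub_self]
  have hy : ∑ j', X (Sum.inr (Sum.inl j')) ^ d -
        ∑ j', reflSubst n₁ n₂ n₃ a b i j (Sum.inr (Sum.inl j')) ^ d =
      X (Sum.inr (Sum.inl j)) ^ d - reflSubst n₁ n₂ n₃ a b i j (Sum.inr (Sum.inl j)) ^ d := by
    rw [← Finset.sum_sub_distrib]
    exact Fintype.sum_eq_single j fun j' hj' => by
      rw [reflSubst_inr_inl_of_ne a b i j hj', sub_self]
  simp only [pSum, map_add, map_mul, map_sum, map_pow, bind₁_X_right, bind₁_C_right,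
    reflSubst_inr_inr]
  linear_combination C (a ^ ((d : ℤ) - 2)) * hx + C (b ^ ((d : ℤ) - 2)) * hy

end Reflection

theorem stmt15_general (n₁ n₂ n₃ : ℕ) (a b c : ℂ) (ha : a ≠ 0) (hb : b ≠ 0)
    (d : ℕ) (hd : 1 ≤ d) (i : Fin n₁) (j : Fin n₂) :
    (C a * X (Sum.inl i) - C b * X (Sum.inr (Sum.inl j))) ^ 2 ∣
      (pSum n₁ n₂ n₃ a b c d -
        MvPolynomial.bind₁ (reflSubst n₁ n₂ n₃ a b i j) (pSum n₁ n₂ n₃ a b c d)) := by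
  rw [pSum_sub_bind₁_reflSubst, reflSubst_inl_self, reflSubst_inr_inl_self]
  exact sq_dvd_reflection_defect _ _ _ _ _ _ _
    (by rw [← C_mul, zpow_natCast_sub_two_mul_self ha hd, C_pow])
    (by rw [← C_mul, zpow_natCast_sub_two_mul_self hb hd, C_pow])

/-- Quasi-invariance of the deformed power sums for the `A(n₁,n₂,n₃)` configuration
(Section 6.4): `p_d − p_d ∘ s_α` is divisible by `B(α,x)²` for `α = a·eᵢ − b·e′ⱼ`. -/
theorem stmt15 (n₁ n₂ n₃ : ℕ) (a b c : ℂ) (ha : a ≠ 0) (hb : b ≠ 0) (hc : c ≠ 0)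
    (hab : a ^ 2 + b ^ 2 ≠ 0) (d : ℕ) (hd : 1 ≤ d) (i : Fin n₁) (j : Fin n₂) :
    (C a * X (Sum.inl i) - C b * X (Sum.inr (Sum.inl j))) ^ 2 ∣
      (pSum n₁ n₂ n₃ a b c d -
        MvPolynomial.bind₁ (reflSubst n₁ n₂ n₃ a b i j) (pSum n₁ n₂ n₃ a b c d)) :=
  stmt15_general n₁ n₂ n₃ a b c ha hb d hd i j
end

section
/- Let m ∈ ℂ and a, b ∈ ℂ with a ≠ 0, a² + b² ≠ 0, and either b² = m·a² or b² = −(1 + m)·a². Then for every x = (x₁, x₂, x₃) ∈ ℂ³ with a·x₁ − b·x₃ = 0, x₁ − x₂ ≠ 0 and a·x₂ − b·x₃ ≠ 0, the following identity holds: 2m(m+1)·a/(x₁ − x₂)³ + 2(a² + b²)·b²/(a·x₂ − b·x₃)³ = 0; and symmetrically (exchanging the roles of the first two coordinates), for every x with a·x₂ − b·x₃ = 0, x₁ − x₂ ≠ 0 and a·x₁ − b·x₃ ≠ 0: −2m(m+1)·a/(x₁ − x₂)³ + 2(a² + b²)·b²/(a·x₁ − b·x₃)³ = 0. Consequently, the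 configuration A₊ = {e₁ − e₂, a·e₁ − b·e₃, a·e₂ − b·e₃} in ℂ³ with multiplicities (m, 1, 1) and Coxeter part R₊ = {e₁ − e₂} satisfies the locus conditions for each of its two non-Coxeter vectors. -/
/-!
Both identities reduce to `m (m + 1) a⁴ = (a² + b²) b²`, which holds in either case of the
hypothesis on `b²`: on the hyperplane `B(α, x) = 0` the remaining linear form `B(β, x)` is `∓ a`
times `x₁ - x₂`, so the two terms of the locus condition have a common denominator.
-/

/-- The standard symmetric bilinear form on `ℂ³`. -/
noncomputable def Bf (x y : Fin 3 → ℂ) : ℂ := ∑ i, x i * y i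

theorem mul_add_one_mul_pow_four_eq {R : Type*} [CommRing R] {m a b : R}
    (hm : b ^ 2 = m * a ^ 2 ∨ b ^ 2 = -(1 + m) * a ^ 2) :
    m * (m + 1) * a ^ 4 = (a ^ 2 + b ^ 2) * b ^ 2 := by
  rcases hm with h | h <;> rw [h] <;> ring

section LocusIdentities

variable {K : Type*} [Field K] {m a b : K}

theorem locus_identity_left (key : m * (m + 1) * a ^ 4 = (a ^ 2 + b ^ 2) * b ^ 2)
    {x₁ x₂ x₃ : K} (h : a * x₁ - b * x₃ = 0) (hd : x₁ - x₂ ≠ 0) (hβ : a * x₂ - b * x₃ ≠ 0) :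
    2 * m * (m + 1) * a / (x₁ - x₂) ^ 3
      + 2 * (a ^ 2 + b ^ 2) * b ^ 2 / (a * x₂ - b * x₃) ^ 3 = 0 := by
  have hβ_eq : a * x₂ - b * x₃ = -(a * (x₁ - x₂)) := by linear_combination h
  have ha : a ≠ 0 := left_ne_zero_of_mul (neg_ne_zero.mp (hβ_eq ▸ hβ))
  rw [hβ_eq]
  field_simp
  linear_combination 2 * key

theorem locus_identity_right (key : m * (m + 1) * a ^ 4 = (a ^ 2 + b ^ 2) * b ^ 2)
    {x₁ x₂ x₃ : K} (h : a * x₂ - b * x₃ = 0) (hd : x₁ - x₂ ≠ 0) (hβ : a * x₁ - b * x₃ ≠ 0) :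
    -(2 * m * (m + 1) * a) / (x₁ - x₂) ^ 3
      + 2 * (a ^ 2 + b ^ 2) * b ^ 2 / (a * x₁ - b * x₃) ^ 3 = 0 := by
  have hβ_eq : a * x₁ - b * x₃ = a * (x₁ - x₂) := by linear_combination h
  have ha : a ≠ 0 := left_ne_zero_of_mul (hβ_eq ▸ hβ)
  rw [hβ_eq]
  field_simp
  linear_combination (-2) * key

end LocusIdentities

theorem Bf_vec3 (u₀ u₁ u₂ : ℂ) (x : Fin 3 → ℂ) :
    Bf ![u₀, u₁, u₂] x = u₀ * x 0 + u₁ * x 1 + u₂ * x 2 := by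
  simp [Bf, Fin.sum_univ_three]

theorem stmt16_general (m a b : ℂ)
    (hm : b ^ 2 = m * a ^ 2 ∨ b ^ 2 = -(1 + m) * a ^ 2) :
    -- the first displayed identity
    (∀ x₁ x₂ x₃ : ℂ, a * x₁ - b * x₃ = 0 → x₁ - x₂ ≠ 0 → a * x₂ - b * x₃ ≠ 0 →
      2 * m * (m + 1) * a / (x₁ - x₂) ^ 3
        + 2 * (a ^ 2 + b ^ 2) * b ^ 2 / (a * x₂ - b * x₃) ^ 3 = 0) ∧
    -- the symmetric identity
    (∀ x₁ x₂ x₃ : ℂ, a * x₂ - b * x₃ = 0 → x₁ - x₂ ≠ 0 → a * x₁ - b * x₃ ≠ 0 →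
      -(2 * m * (m + 1) * a) / (x₁ - x₂) ^ 3
        + 2 * (a ^ 2 + b ^ 2) * b ^ 2 / (a * x₁ - b * x₃) ^ 3 = 0) ∧
    -- locus condition for α = a·e₁ − b·e₃
    (∀ x : Fin 3 → ℂ, Bf ![a, 0, -b] x = 0 →
      Bf ![1, -1, 0] x ≠ 0 → Bf ![0, a, -b] x ≠ 0 →
      m * (m + 1) * Bf ![1, -1, 0] ![1, -1, 0] * Bf ![a, 0, -b] ![1, -1, 0]
          / (Bf ![1, -1, 0] x) ^ 3
        + 1 * (1 + 1) * Bf ![0, a, -b] ![0, a, -b] * Bf ![a, 0, -b] ![0, a, -b]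
          / (Bf ![0, a, -b] x) ^ 3 = 0) ∧
    -- locus condition for α = a·e₂ − b·e₃
    (∀ x : Fin 3 → ℂ, Bf ![0, a, -b] x = 0 →
      Bf ![1, -1, 0] x ≠ 0 → Bf ![a, 0, -b] x ≠ 0 →
      m * (m + 1) * Bf ![1, -1, 0] ![1, -1, 0] * Bf ![0, a, -b] ![1, -1, 0]
          / (Bf ![1, -1, 0] x) ^ 3
        + 1 * (1 + 1) * Bf ![a, 0, -b] ![a, 0, -b] * Bf ![0, a, -b] ![a, 0, -b]
          / (Bf ![a, 0, -b] x) ^ 3 = 0) := by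
  have key := mul_add_one_mul_pow_four_eq hm
  refine ⟨fun _ _ _ => locus_identity_left key, fun _ _ _ => locus_identity_right key,
    fun x h₁ h₂ h₃ => ?_, fun x h₁ h₂ h₃ => ?_⟩
  · simp only [Bf_vec3] at h₁ h₂ h₃ ⊢
    convert locus_identity_left key (x₁ := x 0) (x₂ := x 1) (x₃ := x 2)
      (by linear_combination h₁) (by contrapose! h₂; linear_combination h₂)
      (by contrapose! h₃; linear_combination h₃) using 2 <;> simp <;> ring
  · simp only [Bf_vec3] at h₁ h₂ h₃ ⊢
    convert locus_identity_right key (x₁ := x 0) (x₂ := x 1) (x₃ := x 2)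
      (by linear_combination h₁) (by contrapose! h₂; linear_combination h₂)
      (by contrapose! h₃; linear_combination h₃) using 2 <;> simp <;> ring

/-- Case (1) of Example 7.1: the configuration
`A₊ = {e₁−e₂, a·e₁−b·e₃, a·e₂−b·e₃}` with multiplicities `(m,1,1)`, where `b² = m·a²` or
`b² = −(1+m)·a²`, satisfies the locus conditions for its two non-Coxeter vectors. -/
theorem stmt16 (m a b : ℂ) (ha : a ≠ 0) (hab : a ^ 2 + b ^ 2 ≠ 0)
    (hm : b ^ 2 = m * a ^ 2 ∨ b ^ 2 = -(1 + m) * a ^ 2) :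
    -- the first displayed identity
    (∀ x₁ x₂ x₃ : ℂ, a * x₁ - b * x₃ = 0 → x₁ - x₂ ≠ 0 → a * x₂ - b * x₃ ≠ 0 →
      2 * m * (m + 1) * a / (x₁ - x₂) ^ 3
        + 2 * (a ^ 2 + b ^ 2) * b ^ 2 / (a * x₂ - b * x₃) ^ 3 = 0) ∧
    -- the symmetric identity
    (∀ x₁ x₂ x₃ : ℂ, a * x₂ - b * x₃ = 0 → x₁ - x₂ ≠ 0 → a * x₁ - b * x₃ ≠ 0 →
      -(2 * m * (m + 1) * a) / (x₁ - x₂) ^ 3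
        + 2 * (a ^ 2 + b ^ 2) * b ^ 2 / (a * x₁ - b * x₃) ^ 3 = 0) ∧
    -- locus condition for α = a·e₁ − b·e₃
    (∀ x : Fin 3 → ℂ, Bf ![a, 0, -b] x = 0 →
      Bf ![1, -1, 0] x ≠ 0 → Bf ![0, a, -b] x ≠ 0 →
      m * (m + 1) * Bf ![1, -1, 0] ![1, -1, 0] * Bf ![a, 0, -b] ![1, -1, 0]
          / (Bf ![1, -1, 0] x) ^ 3
        + 1 * (1 + 1) * Bf ![0, a, -b] ![0, a, -b] * Bf ![a, 0, -b] ![0, a, -b]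
          / (Bf ![0, a, -b] x) ^ 3 = 0) ∧
    -- locus condition for α = a·e₂ − b·e₃
    (∀ x : Fin 3 → ℂ, Bf ![0, a, -b] x = 0 →
      Bf ![1, -1, 0] x ≠ 0 → Bf ![a, 0, -b] x ≠ 0 →
      m * (m + 1) * Bf ![1, -1, 0] ![1, -1, 0] * Bf ![0, a, -b] ![1, -1, 0]
          / (Bf ![1, -1, 0] x) ^ 3
        + 1 * (1 + 1) * Bf ![a, 0, -b] ![a, 0, -b] * Bf ![0, a, -b] ![a, 0, -b]
          / (Bf ![a, 0, -b] x) ^ 3 = 0) :=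
  stmt16_general m a b hm
end

section
/- Let A be an associative unital ring, let a, b, δ ∈ A, and let N ≥ 0 be an integer such that ad_{a,b}^{N+1}(δ) = 0 and ad_{b,a}^{N+1}(δ) = 0. Then ad_{a}^{2N}(δ·δ) = C(2N, N)·ad_{a,b}^{N}(δ)·ad_{b,a}^{N}(δ). -/
open Finset

section adOp

variable {A : Type*} [Ring A]

theorem adOp_eq_mulLeft_sub_mulRight (a b : A) :
    adOp a b = ⇑(AddMonoidHom.mulLeft a - AddMonoidHom.mulRight b) :=
  rfl

theorem adOp_iterate_eq_zero_of_le {a b x : A} {m n : ℕ} (hx : (adOp a b)^[m] x = 0)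
    (hmn : m ≤ n) : (adOp a b)^[n] x = 0 := by
  obtain ⟨k, rfl⟩ := Nat.exists_eq_add_of_le' hmn
  rw [Function.iterate_add_apply, hx]
  exact Function.iterate_fixed (by simp [adOp]) k

end adOp

/-- The computation in the proof of Proposition 5.7: if `ad_{a,b}^{N+1} δ = 0` and
`ad_{b,a}^{N+1} δ = 0`, then `ad_a^{2N}(δ·δ) = C(2N,N)·ad_{a,b}^N(δ)·ad_{b,a}^N(δ)`. -/
theorem stmt18 {A : Type*} [Ring A] (a b δ : A) (N : ℕ)
    (h1 : (adOp a b)^[N + 1] δ = 0) (h2 : (adOp b a)^[N + 1] δ = 0) :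
    (adOp a a)^[2 * N] (δ * δ) =
      (2 * N).choose N • ((adOp a b)^[N] δ * (adOp b a)^[N] δ) := by
  rw [adOp_iterate_mul a b a]
  refine sum_eq_single_of_mem (N, N) (mem_antidiagonal.mpr (two_mul N).symm) fun ij hij hne => ?_
  have hsum : ij.1 + ij.2 = 2 * N := mem_antidiagonal.mp hij
  rcases Nat.lt_or_gt_of_ne fun h : ij.1 = N => hne (Prod.ext h (by omega)) with hlt | hgt
  · rw [adOp_iterate_eq_zero_of_le h2 (by omega), mul_zero, smul_zero]
  · rw [adOp_iterate_eq_zero_of_le h1 hgt, zero_mul, smul_zero]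
end
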